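/- Let s ≥ 0. (i) If the adjoint polytope P^(s) has dimension n, then for every r ≥ 0 one has (P^(s))^(r) = P^(s+r), where the adjoint of P^(s) is taken with respect to its own irredundant facet description. (ii) For every real r > 0 one has r·(P^(s)) = (rP)^(rs). -/

import Mathlib

open scoped BigOperators Pointwise

noncomputable section

/-- Pairing `⟨a, x⟩ = ∑ aⱼ xⱼ` of an integer linear functional with a real point. -/
def ipair {n : ℕ} (a : Fin n → ℤ) (x : Fin n → ℝ) : ℝ := ∑ j, (a j : ℝ) * x j

/-- An integer vector is primitive if it is nonzero and not a nontrivial integer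
multiple of another integer vector. -/
def IsPrimitive {n : ℕ} (a : Fin n → ℤ) : Prop :=
  a ≠ 0 ∧ ∀ (k : ℤ) (b : Fin n → ℤ), a = k • b → IsUnit k

/-- The set of integer (lattice) points of `ℝⁿ`. -/
def IntPts (n : ℕ) : Set (Fin n → ℝ) := Set.range (fun z : Fin n → ℤ => fun j => (z j : ℝ))

/-- The dimension of a subset of `ℝⁿ` (the dimension of its affine hull). -/
def setDim {n : ℕ} (S : Set (Fin n → ℝ)) : ℕ := Module.finrank ℝ (vectorSpan ℝ S)

/-- An irredundant facet description `P = {x : A x ≥ b}` of an `n`-dimensional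
rational polytope: the rows `aᵢ` of `A` are primitive integer vectors, the right hand
sides are rational, `P` is bounded and `n`-dimensional, every inequality defines a facet
(a face of dimension `n-1`), and no inequality is repeated. -/
structure PolyDesc (n m : ℕ) : Type where
  hm : 0 < m
  A : Fin m → Fin n → ℤ
  b : Fin m → ℚ
  prim : ∀ i, IsPrimitive (A i)
  bounded : Bornology.IsBounded {x : Fin n → ℝ | ∀ i, (b i : ℝ) ≤ ipair (A i) x}
  fulldim : setDim {x : Fin n → ℝ | ∀ i, (b i : ℝ) ≤ ipair (A i) x} = n
  facet_dim : ∀ i, setDim {x : Fin n → ℝ |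
      (∀ j, (b j : ℝ) ≤ ipair (A j) x) ∧ ipair (A i) x = (b i : ℝ)} + 1 = n
  irredundant : Function.Injective (fun i => (A i, b i))

namespace PolyDesc

variable {n m : ℕ} (D : PolyDesc n m)

/-- The polytope `P` itself. -/
def pts : Set (Fin n → ℝ) := {x | ∀ i, (D.b i : ℝ) ≤ ipair (D.A i) x}

/-- Lattice distance `d_{Fᵢ}(x) = ⟨aᵢ, x⟩ - bᵢ` from (the hyperplane spanned by)
the `i`-th facet. -/
def dF (i : Fin m) (x : Fin n → ℝ) : ℝ := ipair (D.A i) x - (D.b i : ℝ)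

/-- Lattice distance `d_P(x) = minᵢ d_{Fᵢ}(x)` from the boundary of `P`. -/
def dist (x : Fin n → ℝ) : ℝ :=
  Finset.univ.inf'
    (Finset.univ_nonempty_iff.mpr (Fin.pos_iff_nonempty.mp D.hm))
    (fun i => D.dF i x)

/-- The adjoint polytope `P⁽ˢ⁾ = {x : d_P(x) ≥ s}`. -/
def adj (s : ℝ) : Set (Fin n → ℝ) := {x | s ≤ D.dist x}

/-- The `i`-th facet `Fᵢ` of `P`. -/
def facet (i : Fin m) : Set (Fin n → ℝ) := {x ∈ D.pts | ipair (D.A i) x = (D.b i : ℝ)}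

/-- The set `{s > 0 : P⁽ˢ⁾ ≠ ∅}`, whose supremum is `μ(P)⁻¹`. -/
def qcdInvSet : Set ℝ := {s : ℝ | 0 < s ∧ (D.adj s).Nonempty}

/-- `μ(P)⁻¹ = sup {s > 0 : P⁽ˢ⁾ ≠ ∅}`. -/
def qcdInv : ℝ := sSup D.qcdInvSet

/-- The ℚ-codegree `μ(P) = (sup {s > 0 : P⁽ˢ⁾ ≠ ∅})⁻¹`. -/
def qcd : ℝ := D.qcdInv⁻¹

/-- The core `core(P) = P^{(1/μ(P))}`. -/
def core : Set (Fin n → ℝ) := D.adj D.qcdInv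

/-- The codegree `cd(P) = min {k ∈ ℕ, k ≥ 1 : int(kP) ∩ ℤⁿ ≠ ∅}`. -/
def codeg : ℕ := sInf {k : ℕ | 0 < k ∧
  ∃ z : Fin n → ℤ, (fun j => (z j : ℝ)) ∈ interior ((k : ℝ) • D.pts)}

end PolyDesc

/-- The face of `S` on which the linear functional `u` is maximized. -/
def argFace {n : ℕ} (S : Set (Fin n → ℝ)) (u : Fin n → ℝ) : Set (Fin n → ℝ) :=
  {x ∈ S | ∀ y ∈ S, ∑ j, u j * y j ≤ ∑ j, u j * x j}

/-- `S` and `T` have the same normal fan: two linear functionals lie in the same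
(relatively open) cone of the normal fan of `S`, i.e. are maximized on the same face
of `S`, iff the same holds for `T`. -/
def SameNormalFan {n : ℕ} (S T : Set (Fin n → ℝ)) : Prop :=
  ∀ u v : Fin n → ℝ, (argFace S u = argFace S v ↔ argFace T u = argFace T v)

/-- The normal fan of `S` refines the normal fan of `T`. -/
def RefinesNormalFan {n : ℕ} (S T : Set (Fin n → ℝ)) : Prop :=
  ∀ u v : Fin n → ℝ, argFace S u = argFace S v → argFace T u = argFace T v

namespace PolyDesc
variable {n m : ℕ} (D : PolyDesc n m)

/-- `{s > 0 : N(P⁽ˢ⁾) = N(P)}`, whose supremum is `τ(P)⁻¹`. -/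
def nefInvSet : Set ℝ := {s : ℝ | 0 < s ∧ SameNormalFan (D.adj s) D.pts}

/-- `τ(P)⁻¹ = sup {s > 0 : N(P⁽ˢ⁾) = N(P)}`. -/
def nefInv : ℝ := sSup D.nefInvSet

/-- The nef value `τ(P)`. -/
def nefVal : ℝ := D.nefInv⁻¹

/-- The set of inequalities active at `x`; the normal cone of the minimal face of `P`
containing `x` is generated by `{aᵢ : i ∈ active x}`, and all cones of the normal fan
of `P` arise in this way. -/
def active (x : Fin n → ℝ) : Set (Fin m) := {i | ipair (D.A i) x = (D.b i : ℝ)}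

/-- The normal cone at the vertex `v` is ℚ-Gorenstein of index `r`, witnessed by the
primitive lattice point `u = u_σ` with `⟨aᵢ, u⟩ = r` for all active `i`. -/
def VertexQG (v : Fin n → ℝ) (u : Fin n → ℤ) (r : ℤ) : Prop :=
  IsPrimitive u ∧ 0 < r ∧ ∀ i ∈ D.active v, (∑ j, D.A i j * u j) = r

/-- The normal fan of `P` is ℚ-Gorenstein: every maximal cone (normal cone of a
vertex, i.e. of an extreme point) is ℚ-Gorenstein. -/
def QGorenstein : Prop := ∀ v ∈ Set.extremePoints ℝ D.pts, ∃ u r, D.VertexQG v u r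

end PolyDesc

/-- The point `v(s) = v + (s/r_σ) • u_σ`. -/
def vmove {n : ℕ} (v : Fin n → ℝ) (s : ℝ) (u : Fin n → ℤ) (r : ℤ) : Fin n → ℝ :=
  v + (s / (r : ℝ)) • (fun j => ((u j : ℝ)))

/-- The height of a point `y` in the cone generated by `{aᵢ : i ∈ I}`:
`ht(y) = max {∑ λᵢ : λᵢ ≥ 0, ∑ λᵢ aᵢ = y}`. -/
def coneHeight {n m : ℕ} (D : PolyDesc n m) (I : Set (Fin m)) (y : Fin n → ℝ) : ℝ :=
  sSup {t : ℝ | ∃ c : Fin m → ℝ, (∀ i, 0 ≤ c i) ∧ (∀ i ∉ I, c i = 0) ∧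
    (y = ∑ i, c i • (fun j => ((D.A i j : ℝ)))) ∧ t = ∑ i, c i}

/-- `P` is α-canonical: for every cone `σ` of the normal fan of `P` (the normal cone
of the minimal face containing a point `x ∈ P`, generated by `{aᵢ : i ∈ active x}`),
every nonzero lattice point of `σ` has height at least `α`. -/
def AlphaCanonical {n m : ℕ} (D : PolyDesc n m) (α : ℝ) : Prop :=
  ∀ x ∈ D.pts, ∀ z : Fin n → ℤ, z ≠ 0 →
    (∃ c : Fin m → ℝ, (∀ i, 0 ≤ c i) ∧ (∀ i ∉ D.active x, c i = 0) ∧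
      ((fun j => ((z j : ℝ))) = ∑ i, c i • (fun j => ((D.A i j : ℝ))))) →
    α ≤ coneHeight D (D.active x) (fun j => ((z j : ℝ)))

/-- `P` is a lattice polytope: the convex hull of finitely many integer points. -/
def IsLatticePoly {n : ℕ} (P : Set (Fin n → ℝ)) : Prop :=
  ∃ V : Finset (Fin n → ℤ),
    P = convexHull ℝ ((fun z : Fin n → ℤ => fun j => ((z j : ℝ))) '' (V : Set (Fin n → ℤ)))

/-- The `i`-th standard basis vector of `ℝᵗ`. -/
def stdBasisVec (t : ℕ) (i : Fin t) : Fin t → ℝ := fun j => if j = i then 1 else 0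

/-- The marking vectors of a Cayley sum: `0, e₁, …, e_t ∈ ℝᵗ`. -/
def cayleyVec (t : ℕ) : Fin (t + 1) → (Fin t → ℝ) :=
  fun j => if h : (j : ℕ) = 0 then 0 else stdBasisVec t ⟨(j : ℕ) - 1, by have := j.isLt; omega⟩

/-- The Cayley sum `Q₀ * ⋯ * Q_t = conv((Q₀ × {0}) ∪ (Q₁ × {e₁}) ∪ ⋯ ∪ (Q_t × {e_t}))`. -/
def cayleySum {k t : ℕ} (Q : Fin (t + 1) → Set (Fin k → ℝ)) :
    Set ((Fin k → ℝ) × (Fin t → ℝ)) :=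
  convexHull ℝ (⋃ j, (Q j) ×ˢ ({cayleyVec t j} : Set (Fin t → ℝ)))

/-- `P ⊆ ℝⁿ` is a Cayley polytope `P₀ * ⋯ * P_t` of length `t+1` of lattice polytopes
`Pⱼ ⊆ ℝᵏ` with `k + t = n`: some affine lattice isomorphism `ℤⁿ ≅ ℤᵏ × ℤᵗ`
identifies `P` with such a Cayley sum. -/
def IsCayley {n : ℕ} (P : Set (Fin n → ℝ)) (k t : ℕ) : Prop :=
  k + t = n ∧
  ∃ Q : Fin (t + 1) → Finset (Fin k → ℤ), (∀ j, (Q j).Nonempty) ∧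
  ∃ f : (Fin n → ℝ) ≃ᵃ[ℝ] (Fin k → ℝ) × (Fin t → ℝ),
    f '' IntPts n = (IntPts k) ×ˢ (IntPts t) ∧
    f '' P = cayleySum (fun j =>
      convexHull ℝ ((fun z : Fin k → ℤ => fun i => ((z i : ℝ))) '' (Q j : Set (Fin k → ℤ))))

/-- The unimodular simplex `Δₙ = conv(0, e₁, …, eₙ)`. -/
def unimodSimplex (n : ℕ) : Set (Fin n → ℝ) :=
  convexHull ℝ (insert (0 : Fin n → ℝ) (Set.range (stdBasisVec n)))

/-- Two subsets of `ℝⁿ` are unimodularly equivalent: an affine lattice automorphism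
maps one onto the other. -/
def UnimodEquiv {n : ℕ} (P P' : Set (Fin n → ℝ)) : Prop :=
  ∃ f : (Fin n → ℝ) ≃ᵃ[ℝ] (Fin n → ℝ), f '' IntPts n = IntPts n ∧ f '' P = P'

/-- The codegree `cd(P) = min {k ∈ ℕ, k ≥ 1 : int(kP) ∩ ℤⁿ ≠ ∅}` of a polytope given
as a set. -/
def codegS {n : ℕ} (P : Set (Fin n → ℝ)) : ℕ :=
  sInf {k : ℕ | 0 < k ∧ ∃ z : Fin n → ℤ, (fun j => (z j : ℝ)) ∈ interior ((k : ℝ) • P)}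

/-- `P` has lattice width one: some nonzero integer linear functional has minimum `c`
and maximum `c + 1` on `P`. -/
def HasLatticeWidthOne {n : ℕ} (P : Set (Fin n → ℝ)) : Prop :=
  ∃ u : Fin n → ℤ, u ≠ 0 ∧ ∃ c : ℤ,
    (∀ x ∈ P, (c : ℝ) ≤ ipair u x ∧ ipair u x ≤ (c : ℝ) + 1) ∧
    (∃ x ∈ P, ipair u x = (c : ℝ)) ∧ (∃ x ∈ P, ipair u x = (c : ℝ) + 1)

/-- `P` is a lattice pyramid: for some primitive `u`, `P` is the convex hull of a base
lying in the lattice hyperplane `{⟨u, ·⟩ = c}` and an apex at lattice distance one from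
it (this is equivalent to being unimodularly equivalent to
`conv((Q × {0}) ∪ {(0, …, 0, 1)})` for an `(n-1)`-dimensional lattice polytope `Q`). -/
def IsLatticePyramid {n : ℕ} (P : Set (Fin n → ℝ)) : Prop :=
  ∃ u : Fin n → ℤ, IsPrimitive u ∧ ∃ c : ℤ, ∃ apex ∈ P,
    ipair u apex = (c : ℝ) + 1 ∧
    P = convexHull ℝ ({x ∈ P | ipair u x = (c : ℝ)} ∪ {apex})

/-- `F` is a facet of `S`: an exposed face of dimension `dim S - 1`. -/
def IsFacetOf {n : ℕ} (F S : Set (Fin n → ℝ)) : Prop :=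
  IsExposed ℝ S F ∧ F.Nonempty ∧ setDim F + 1 = setDim S

/-!
Part (ii) is a rescaling of the defining inequalities. For part (i) put `Q = P⁽ˢ⁾`. A primitive
facet normal of a full-dimensional polyhedron is determined by the facet, so every facet
inequality of `Q` is one of the inequalities `⟨aᵢ, x⟩ ≥ bᵢ + s`; this gives `P⁽ˢ⁺ʳ⁾ ⊆ Q⁽ʳ⁾`.
Conversely let `x ∈ Q⁽ʳ⁾` and let `p` lie on the facet `Fᵢ` of `P`. Since `p ∈ Q⁽⁻ˢ⁾` and the
lattice distance `d_Q` is concave, `s/(s+r) • x + r/(s+r) • p` lies in `Q`, and evaluating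
`⟨aᵢ, ·⟩ ≥ bᵢ + s` there gives `⟨aᵢ, x⟩ ≥ bᵢ + s + r`. When `s = 0` the two descriptions of
`P` simply exchange roles. In dimension one facets may be empty, and instead every valid
inequality is dominated by a defining one with the same normal.
-/

section Pairing

variable {n : ℕ}

def ipairL (a : Fin n → ℤ) : (Fin n → ℝ) →ₗ[ℝ] ℝ where
  toFun := ipair a
  map_add' x y := by simp only [ipair, Pi.add_apply, mul_add, Finset.sum_add_distrib]
  map_smul' c x := by
    simp only [ipair, Pi.smul_apply, smul_eq_mul, RingHom.id_apply, Finset.mul_sum, mul_left_comm]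

@[simp] lemma ipairL_apply (a : Fin n → ℤ) (x : Fin n → ℝ) : ipairL a x = ipair a x := rfl

lemma ipair_add (a : Fin n → ℤ) (x y : Fin n → ℝ) : ipair a (x + y) = ipair a x + ipair a y :=
  map_add (ipairL a) x y

lemma ipair_smul (a : Fin n → ℤ) (c : ℝ) (x : Fin n → ℝ) : ipair a (c • x) = c * ipair a x :=
  map_smul (ipairL a) c x

lemma ipair_sub (a : Fin n → ℤ) (x y : Fin n → ℝ) : ipair a (x - y) = ipair a x - ipair a y :=
  map_sub (ipairL a) x y

lemma ipair_neg_left (c : Fin n → ℤ) (x : Fin n → ℝ) : ipair (-c) x = -ipair c x := by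
  simp [ipair]

lemma ipair_single (a : Fin n → ℤ) (j : Fin n) : ipair a (Pi.single j 1) = a j := by
  simp [ipair, Pi.single_apply]

lemma ipair_self_pos {a : Fin n → ℤ} (ha : a ≠ 0) : 0 < ipair a (fun j => (a j : ℝ)) := by
  obtain ⟨j, hj⟩ := Function.ne_iff.mp ha
  exact Finset.sum_pos' (fun j _ => mul_self_nonneg _)
    ⟨j, Finset.mem_univ _, mul_self_pos.mpr (by exact_mod_cast hj)⟩

lemma ipairL_ne_zero {a : Fin n → ℤ} (ha : a ≠ 0) : ipairL a ≠ 0 := fun h =>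
  (ipair_self_pos ha).ne' (by simpa using LinearMap.congr_fun h (fun j => (a j : ℝ)))

end Pairing

section Primitive

variable {n : ℕ}

lemma IsPrimitive.exists_sum_mul_eq_one {a : Fin n → ℤ} (ha : IsPrimitive a) :
    ∃ y : Fin n → ℤ, ∑ j, y j * a j = 1 := by
  set I : Ideal ℤ := Ideal.span (Set.range a)
  obtain ⟨g, hg⟩ := Submodule.IsPrincipal.principal I
  have hdvd : ∀ j, g ∣ a j := fun j => Ideal.mem_span_singleton.mp <| by
    rw [← Ideal.submodule_span_eq, ← hg]
    exact Ideal.subset_span (Set.mem_range_self j)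
  have hI : I = ⊤ := by
    rw [hg, Ideal.span_singleton_eq_top]
    exact ha.2 g (fun j => a j / g) (funext fun j => (Int.mul_ediv_cancel' (hdvd j)).symm)
  have h1 : (1 : ℤ) ∈ I := hI ▸ Submodule.mem_top
  exact (Submodule.mem_span_range_iff_exists_fun ℤ).mp h1

lemma IsPrimitive.exists_int_eq_of_smul {a c : Fin n → ℤ} (ha : IsPrimitive a) {q : ℝ}
    (h : ∀ j, (c j : ℝ) = q * a j) : ∃ k : ℤ, q = k := by
  obtain ⟨y, hy⟩ := ha.exists_sum_mul_eq_one
  refine ⟨∑ j, y j * c j, ?_⟩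
  have hy' : (∑ j, (y j : ℝ) * a j) = 1 := by exact_mod_cast hy
  push_cast
  simp only [h, mul_left_comm _ q, ← Finset.mul_sum, hy', mul_one]

lemma IsPrimitive.eq_of_pos_smul {a c : Fin n → ℤ} (ha : IsPrimitive a) (hc : IsPrimitive c)
    {q : ℝ} (hq : 0 < q) (h : ∀ j, (c j : ℝ) = q * a j) : c = a := by
  obtain ⟨k, hk⟩ := ha.exists_int_eq_of_smul h
  obtain ⟨l, hl⟩ := hc.exists_int_eq_of_smul (c := a) (q := q⁻¹) fun j => by
    rw [h, inv_mul_cancel_left₀ hq.ne']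
  have hkl : k * l = 1 := by
    exact_mod_cast (show (k : ℝ) * l = 1 by rw [← hk, ← hl, mul_inv_cancel₀ hq.ne'])
  have hq1 : q = 1 := by
    rcases Int.eq_one_or_neg_one_of_mul_eq_one hkl with h1 | h1
    · rw [hk, h1, Int.cast_one]
    · exact absurd hq (by rw [hk, h1]; norm_num)
  funext j
  exact Int.cast_injective (α := ℝ) ((h j).trans (by rw [hq1, one_mul]))

lemma IsPrimitive.eq_or_eq_neg_of_dim_one (hn : n = 1) {a c : Fin n → ℤ} (ha : IsPrimitive a)
    (hc : IsPrimitive c) : a = c ∨ a = -c := by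
  subst hn
  have hunit : ∀ d : Fin 1 → ℤ, IsPrimitive d → d = 1 ∨ d = -1 := fun d hd =>
    (Int.isUnit_iff.mp (hd.2 (d 0) 1 (funext fun j => by simp [Subsingleton.elim j 0]))).imp
      (fun h => funext fun j => by simp [Subsingleton.elim j 0, h])
      (fun h => funext fun j => by simp [Subsingleton.elim j 0, h])
  rcases hunit a ha with rfl | rfl <;> rcases hunit c hc with rfl | rfl <;> simp

end Primitive

/-- Induction on the inequalities: averaging with a point where the next inequality is strict
keeps the earlier ones strict. -/
lemma Convex.exists_forall_eq_of_apply_eq {E ι : Type*} [AddCommGroup E] [Module ℝ E] [Finite ι]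
    {C : Set E} (hC : Convex ℝ C) (hne : C.Nonempty) (ℓ : ι → E →ₗ[ℝ] ℝ) (β : ι → ℝ)
    (hval : ∀ j, ∀ x ∈ C, β j ≤ ℓ j x) :
    ∃ w ∈ C, ∀ j, ℓ j w = β j → ∀ x ∈ C, ℓ j x = β j := by
  classical
  have := Fintype.ofFinite ι
  suffices h : ∀ T : Finset ι, ∃ w ∈ C, ∀ j ∈ T, (∃ x ∈ C, β j < ℓ j x) → β j < ℓ j w by
    obtain ⟨w, hwC, hw⟩ := h Finset.univ
    refine ⟨w, hwC, fun j hj x hx => (hval j x hx).antisymm' (not_lt.mp fun hlt => ?_)⟩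
    exact (hw j (Finset.mem_univ j) ⟨x, hx, hlt⟩).ne' hj
  intro T
  induction T using Finset.induction_on with
  | empty => exact ⟨hne.some, hne.some_mem, by simp⟩
  | @insert j₀ T _ ih =>
    obtain ⟨w, hwC, hw⟩ := ih
    by_cases hex : ∃ x ∈ C, β j₀ < ℓ j₀ x
    · obtain ⟨x₀, hx₀C, hx₀⟩ := hex
      refine ⟨(1 / 2 : ℝ) • w + (1 / 2 : ℝ) • x₀, hC hwC hx₀C (by norm_num) (by norm_num)
        (by norm_num), fun j hj hexj => ?_⟩
      simp only [map_add, map_smul, smul_eq_mul]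
      rcases Finset.mem_insert.mp hj with rfl | hjT
      · linarith [hval j w hwC]
      · linarith [hw j hjT hexj, hval j x₀ hx₀C]
    · refine ⟨w, hwC, fun j hj hexj => ?_⟩
      rcases Finset.mem_insert.mp hj with rfl | hjT
      · exact absurd hexj hex
      · exact hw j hjT hexj

section Dimension

variable {n : ℕ} {G : Set (Fin n → ℝ)} {a : Fin n → ℤ} {β : ℝ}

lemma vectorSpan_le_ker_ipairL (h : ∀ x ∈ G, ipair a x = β) :
    vectorSpan ℝ G ≤ LinearMap.ker (ipairL a) := by
  rw [vectorSpan_def, Submodule.span_le]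
  rintro v ⟨x, hx, y, hy, rfl⟩
  simp [ipair_sub, h x hx, h y hy]

lemma finrank_ker_ipairL (ha : a ≠ 0) : Module.finrank ℝ (LinearMap.ker (ipairL a)) + 1 = n := by
  simpa using Module.Dual.finrank_ker_add_one_of_ne_zero (ipairL_ne_zero ha)

lemma ker_ipairL_eq_vectorSpan (ha : a ≠ 0) (hG : setDim G + 1 = n)
    (h : ∀ x ∈ G, ipair a x = β) : LinearMap.ker (ipairL a) = vectorSpan ℝ G :=
  (Submodule.eq_of_le_of_finrank_le (vectorSpan_le_ker_ipairL h)
    (by rw [setDim] at hG; have := finrank_ker_ipairL ha; omega)).symm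

lemma exists_lt_ipair_of_setDim_eq (hG : setDim G = n) (ha : a ≠ 0)
    (hval : ∀ x ∈ G, β ≤ ipair a x) : ∃ p ∈ G, β < ipair a p := by
  by_contra! h
  have := Submodule.finrank_mono
    (vectorSpan_le_ker_ipairL fun x hx => le_antisymm (h x hx) (hval x hx))
  rw [setDim] at hG
  have := finrank_ker_ipairL ha
  omega

lemma Set.Nonempty.of_setDim_pos (h : 0 < setDim G) : G.Nonempty := by
  rw [Set.nonempty_iff_ne_empty]
  rintro rfl
  rw [setDim, vectorSpan_empty, finrank_bot] at h
  exact h.false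

/-- The kernel of `a` is the span of `G`, on which `c` vanishes too, so `c` is a multiple of `a`;
a point of `K` off the hyperplane makes the factor positive. -/
lemma IsPrimitive.eq_of_tight {K : Set (Fin n → ℝ)} {c : Fin n → ℤ} {γ : ℝ}
    (ha : IsPrimitive a) (hc : IsPrimitive c) (hK : setDim K = n) (hG : setDim G + 1 = n)
    (hGne : G.Nonempty) (haK : ∀ x ∈ K, β ≤ ipair a x) (hcK : ∀ x ∈ K, γ ≤ ipair c x)
    (haG : ∀ x ∈ G, ipair a x = β) (hcG : ∀ x ∈ G, ipair c x = γ) : a = c ∧ β = γ := by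
  obtain ⟨w, hw⟩ := hGne
  have hker : LinearMap.ker (ipairL a) ≤ LinearMap.ker (ipairL c) :=
    ker_ipairL_eq_vectorSpan ha.1 hG haG ▸ vectorSpan_le_ker_ipairL hcG
  obtain ⟨q, hq⟩ : ∃ q : ℝ, ∀ x, ipair c x = q * ipair a x := by
    have := mem_span_of_iInf_ker_le_ker (L := fun _ : Unit => ipairL a) (by simpa using hker)
    obtain ⟨q, hq⟩ := Submodule.mem_span_singleton.mp (by simpa [Set.range_const] using this)
    exact ⟨q, fun x => by rw [← ipairL_apply, ← hq]; rfl⟩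
  obtain ⟨p, hpK, hp⟩ := exists_lt_ipair_of_setDim_eq hK ha.1 haK
  have hγ : γ = q * β := by rw [← hcG w hw, hq, haG w hw]
  have hq0 : 0 < q := by
    have hqne : q ≠ 0 := by
      rintro rfl
      simpa [hq] using ipair_self_pos hc.1
    have := hcK p hpK
    rw [hq, hγ] at this
    rcases hqne.lt_or_gt with hneg | hpos
    · nlinarith
    · exact hpos
  have hca : c = a := ha.eq_of_pos_smul hc hq0 fun j => by
    simpa [ipair_single] using hq (Pi.single j 1)
  refine ⟨hca.symm, ?_⟩
  rw [← haG w hw, ← hcG w hw, hca]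

end Dimension

def polyhedron {n : ℕ} {ι : Type*} (a : ι → Fin n → ℤ) (β : ι → ℝ) : Set (Fin n → ℝ) :=
  {x | ∀ j, β j ≤ ipair (a j) x}

section Polyhedron

variable {n : ℕ} {ι κ : Type*} {a : ι → Fin n → ℤ} {β : ι → ℝ}

lemma polyhedron_add_subset {a' : κ → Fin n → ℤ} {β' : κ → ℝ}
    (h : ∀ k, ∃ j, a j = a' k ∧ β' k ≤ β j) (t : ℝ) :
    polyhedron a (fun j => β j + t) ⊆ polyhedron a' (fun k => β' k + t) := by
  intro x hx k
  obtain ⟨j, hj, hle⟩ := h k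
  have := hx j
  simp only [hj] at this
  linarith

lemma smul_add_smul_mem_polyhedron {β' : ι → ℝ} {x y : Fin n → ℝ} (hx : x ∈ polyhedron a β)
    (hy : y ∈ polyhedron a β') {p q : ℝ} (hp : 0 ≤ p) (hq : 0 ≤ q) :
    p • x + q • y ∈ polyhedron a (fun j => p * β j + q * β' j) := fun j => by
  rw [ipair_add, ipair_smul, ipair_smul]
  exact add_le_add (mul_le_mul_of_nonneg_left (hx j) hp) (mul_le_mul_of_nonneg_left (hy j) hq)

lemma convex_polyhedron : Convex ℝ (polyhedron a β) := by
  intro x hx y hy p q hp hq hpq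
  simpa only [← add_mul, hpq, one_mul] using smul_add_smul_mem_polyhedron hx hy hp hq

/-- Moving from `w` slightly against the normal `c` stays inside the polyhedron. -/
lemma lt_ipair_of_forall_lt [Finite ι] {c : Fin n → ℤ} {γ : ℝ} (hc : c ≠ 0)
    (hvalid : ∀ x ∈ polyhedron a β, γ ≤ ipair c x) {w : Fin n → ℝ}
    (hw : ∀ j, β j < ipair (a j) w) : γ < ipair c w := by
  set d : Fin n → ℝ := fun j => (c j : ℝ)
  have hopen : IsOpen {x : Fin n → ℝ | ∀ j, β j < ipair (a j) x} := by
    simp only [Set.ofPred_forall]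
    exact isOpen_iInter_of_finite fun j =>
      isOpen_lt continuous_const ((ipairL (a j)).continuous_of_finiteDimensional)
  have hpath : Filter.Tendsto (fun ε : ℝ => w - ε • d) (nhdsWithin 0 (Set.Ioi 0)) (nhds w) := by
    have : Continuous fun ε : ℝ => w - ε • d := by fun_prop
    simpa using (this.tendsto 0).mono_left nhdsWithin_le_nhds
  obtain ⟨ε, hεU, hε⟩ :=
    ((hpath.eventually (hopen.mem_nhds hw)).and self_mem_nhdsWithin).exists
  have := hvalid _ fun j => (hεU j).le
  rw [ipair_sub, ipair_smul] at this
  nlinarith [ipair_self_pos hc, hε]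

/-- Otherwise the polyhedron contains a ray in direction `-c`. -/
lemma exists_eq_of_forall_eq_or_eq_neg {c : Fin n → ℤ} {γ : ℝ} (hc : c ≠ 0)
    (ha : ∀ j, a j = c ∨ a j = -c) (hne : (polyhedron a β).Nonempty)
    (hvalid : ∀ x ∈ polyhedron a β, γ ≤ ipair c x) : ∃ j, a j = c := by
  by_contra! hJ
  obtain ⟨q, hq⟩ := hne
  set d : Fin n → ℝ := fun j => (c j : ℝ)
  have hN := ipair_self_pos hc
  set t : ℝ := (ipair c q - γ + 1) / ipair c d
  have ht : t * ipair c d = ipair c q - γ + 1 := div_mul_cancel₀ _ hN.ne'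
  have hγq := hvalid q hq
  have hmem : q - t • d ∈ polyhedron a β := fun j => by
    have hj := (ha j).resolve_left (hJ j)
    have := hq j
    rw [hj, ipair_neg_left] at this ⊢
    rw [ipair_sub, ipair_smul]
    linarith
  have := hvalid _ hmem
  rw [ipair_sub, ipair_smul] at this
  linarith

/-- Take the defining inequality with normal `c` and the largest right hand side `βⱼ₀`: moving a
point of the polyhedron along `c` to the level `⟨c, ·⟩ = βⱼ₀` stays in the polyhedron. -/
lemma exists_eq_le_of_forall_eq_or_eq_neg [Finite ι] {c : Fin n → ℤ} {γ : ℝ} (hc : c ≠ 0)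
    (ha : ∀ j, a j = c ∨ a j = -c) (hne : (polyhedron a β).Nonempty)
    (hvalid : ∀ x ∈ polyhedron a β, γ ≤ ipair c x) : ∃ j, a j = c ∧ γ ≤ β j := by
  classical
  have := Fintype.ofFinite ι
  obtain ⟨j₀, hj₀, hmax⟩ := Finset.exists_max_image (Finset.univ.filter fun j => a j = c) β
    (by simpa [Finset.filter_nonempty_iff] using exists_eq_of_forall_eq_or_eq_neg hc ha hne hvalid)
  replace hj₀ : a j₀ = c := (Finset.mem_filter.mp hj₀).2
  obtain ⟨q, hq⟩ := hne
  set d : Fin n → ℝ := fun j => (c j : ℝ)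
  set t : ℝ := (β j₀ - ipair c q) / ipair c d
  have ht : ipair c (q + t • d) = β j₀ := by
    rw [ipair_add, ipair_smul, div_mul_cancel₀ _ (ipair_self_pos hc).ne']
    ring
  refine ⟨j₀, hj₀, ht ▸ hvalid _ fun j => ?_⟩
  rcases ha j with hj | hj
  · rw [hj, ht]
    exact hmax j (by simp [hj])
  · have hqj := hq j
    have hqj₀ := hq j₀
    rw [hj, ipair_neg_left] at hqj ⊢
    rw [hj₀] at hqj₀
    rw [ht]
    linarith

/-- At a generic point of the facet some defining inequality is tight, by `lt_ipair_of_forall_lt`,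
hence it is tight on the whole facet. -/
lemma exists_eq_of_isFacet [Finite ι]
    {c : Fin n → ℤ} {γ : ℝ} (hprim : ∀ j, IsPrimitive (a j)) (hc : IsPrimitive c)
    (hK : setDim (polyhedron a β) = n) (hvalid : ∀ x ∈ polyhedron a β, γ ≤ ipair c x)
    (hG : setDim {x ∈ polyhedron a β | ipair c x = γ} + 1 = n)
    (hGne : {x ∈ polyhedron a β | ipair c x = γ}.Nonempty) : ∃ j, a j = c ∧ β j = γ := by
  have hGconv : Convex ℝ {x ∈ polyhedron a β | ipair c x = γ} :=
    convex_polyhedron.inter (convex_hyperplane (ipairL c).isLinear γ)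
  obtain ⟨w, hwG, hw⟩ := hGconv.exists_forall_eq_of_apply_eq hGne (fun j => ipairL (a j)) β
    fun j x hx => hx.1 j
  obtain ⟨j, hj⟩ : ∃ j, ipair (a j) w = β j := by
    by_contra! h
    exact (lt_ipair_of_forall_lt hc.1 hvalid fun j => (hwG.1 j).lt_of_ne (h j).symm).ne' hwG.2
  exact ⟨j, (hprim j).eq_of_tight hc hK hG ⟨w, hwG⟩ (fun x hx => hx j) hvalid (hw j hj)
    fun x hx => hx.2⟩

end Polyhedron

namespace PolyDesc

lemma one_le_dim {n m : ℕ} (D : PolyDesc n m) : 1 ≤ n := by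
  by_contra! h
  obtain rfl : n = 0 := by omega
  exact (D.prim ⟨0, D.hm⟩).1 (Subsingleton.elim _ _)

variable {n m m' : ℕ} (D : PolyDesc n m)

lemma mem_adj_iff {t : ℝ} {x : Fin n → ℝ} :
    x ∈ D.adj t ↔ ∀ i, (D.b i : ℝ) + t ≤ ipair (D.A i) x := by
  simp only [adj, dist, dF, Set.mem_ofPred_eq, Finset.le_inf'_iff, Finset.mem_univ, true_imp_iff,
    le_sub_iff_add_le']

lemma adj_eq_polyhedron (t : ℝ) : D.adj t = polyhedron D.A (fun i => (D.b i : ℝ) + t) :=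
  Set.ext fun _ => D.mem_adj_iff

lemma adj_zero : D.adj 0 = D.pts := by
  simp [adj_eq_polyhedron, pts, polyhedron]

lemma pts_nonempty : D.pts.Nonempty :=
  .of_setDim_pos (by rw [pts, D.fulldim]; exact D.one_le_dim)

lemma facet_nonempty (hn : 2 ≤ n) (i : Fin m) : (D.facet i).Nonempty :=
  .of_setDim_pos (by
    show 0 < setDim {x | (∀ j, (D.b j : ℝ) ≤ ipair (D.A j) x) ∧ ipair (D.A i) x = D.b i}
    have := D.facet_dim i
    omega)

lemma smul_adj {r : ℝ} (hr : 0 < r) (s : ℝ) :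
    r • D.adj s = {x | ∀ i, r * (D.b i : ℝ) + r * s ≤ ipair (D.A i) x} := by
  ext x
  simp only [Set.mem_smul_set_iff_inv_smul_mem₀ hr.ne', mem_adj_iff, ipair_smul,
    le_inv_mul_iff₀ hr, mul_add, Set.mem_ofPred_eq]

lemma smul_add_smul_mem_adj {x y : Fin n → ℝ} {s t p q : ℝ} (hx : x ∈ D.adj s)
    (hy : y ∈ D.adj t) (hp : 0 ≤ p) (hq : 0 ≤ q) (hpq : p + q = 1) :
    p • x + q • y ∈ D.adj (p * s + q * t) := by
  rw [adj_eq_polyhedron] at *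
  convert smul_add_smul_mem_polyhedron hx hy hp hq using 2
  ext i
  linear_combination -(D.b i : ℝ) * hpq

/-- For `n = 1` the facet condition of `PolyDesc` is void (`setDim ∅ = 0`), which is why only
`≤` can be concluded. -/
lemma exists_row_le_of_pts_eq {ι : Type*} [Finite ι] {a : ι → Fin n → ℤ} {β : ι → ℝ}
    (hprim : ∀ j, IsPrimitive (a j)) (h : D.pts = polyhedron a β) (k : Fin m) :
    ∃ j, a j = D.A k ∧ (D.b k : ℝ) ≤ β j := by
  have hvalid : ∀ x ∈ polyhedron a β, (D.b k : ℝ) ≤ ipair (D.A k) x := h ▸ fun x hx => hx k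
  have hK : setDim (polyhedron a β) = n := h ▸ D.fulldim
  rcases D.one_le_dim.eq_or_lt with hn | hn
  · exact exists_eq_le_of_forall_eq_or_eq_neg (D.prim k).1
      (fun j => (hprim j).eq_or_eq_neg_of_dim_one hn.symm (D.prim k))
      (.of_setDim_pos (by omega)) hvalid
  · have hG : setDim {x ∈ polyhedron a β | ipair (D.A k) x = D.b k} + 1 = n := h ▸ D.facet_dim k
    obtain ⟨j, hj, hjb⟩ := exists_eq_of_isFacet hprim (D.prim k) hK hvalid hG
      (.of_setDim_pos (by omega))
    exact ⟨j, hj, hjb.ge⟩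

/-- The point `s/(s+r) • x + r/(s+r) • p` lies in `D.pts`, by concavity of `d_P`. -/
lemma add_le_ipair_of_mem_adj {c : Fin n → ℤ} {β s r : ℝ}
    (hvalid : ∀ y ∈ D.pts, β + s ≤ ipair c y)
    {p : Fin n → ℝ} (hp : p ∈ D.adj (-s)) (hpc : ipair c p = β) (hs : 0 < s) (hr : 0 ≤ r)
    {x : Fin n → ℝ} (hx : x ∈ D.adj r) : β + s + r ≤ ipair c x := by
  have hsr : 0 < s + r := by linarith
  have hy := D.smul_add_smul_mem_adj hx hp (div_nonneg hs.le hsr.le) (div_nonneg hr hsr.le)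
    (by field_simp)
  rw [show s / (s + r) * r + r / (s + r) * -s = 0 by ring, adj_zero] at hy
  have := hvalid _ hy
  rw [ipair_add, ipair_smul, ipair_smul, hpc] at this
  have key : s * (β + s + r) ≤ s * ipair c x := by
    field_simp at this
    nlinarith
  exact le_of_mul_le_mul_left key hs

variable (D' : PolyDesc n m') {s : ℝ}

lemma adj_add_subset_adj (hQ : D'.pts = D.adj s) (r : ℝ) : D.adj (s + r) ⊆ D'.adj r := by
  have := polyhedron_add_subset
    (D'.exists_row_le_of_pts_eq D.prim (hQ.trans (D.adj_eq_polyhedron s))) r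
  rw [D.adj_eq_polyhedron, D'.adj_eq_polyhedron]
  simpa only [add_assoc] using this

lemma adj_subset_adj_add (hs : 0 ≤ s) (hQ : D'.pts = D.adj s) {r : ℝ} (hr : 0 ≤ r) :
    D'.adj r ⊆ D.adj (s + r) := by
  have hdom : (∀ i, ∃ k, D'.A k = D.A i ∧ (D.b i : ℝ) + s ≤ D'.b k) →
      D'.adj r ⊆ D.adj (s + r) := fun h => by
    rw [D.adj_eq_polyhedron, D'.adj_eq_polyhedron]
    simpa only [add_assoc] using polyhedron_add_subset h r
  have hvalid : ∀ i, ∀ x ∈ D'.pts, (D.b i : ℝ) + s ≤ ipair (D.A i) x := fun i x hx =>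
    D.mem_adj_iff.mp (hQ ▸ hx) i
  rcases D.one_le_dim.eq_or_lt with hn | hn
  · exact hdom fun i => exists_eq_le_of_forall_eq_or_eq_neg (D.prim i).1
      (fun k => (D'.prim k).eq_or_eq_neg_of_dim_one hn.symm (D.prim i))
      D'.pts_nonempty (hvalid i)
  rcases hs.eq_or_lt with rfl | hs
  · refine hdom fun i => ?_
    simpa only [add_zero] using D.exists_row_le_of_pts_eq D'.prim (by rw [← adj_zero, ← hQ]; rfl) i
  intro x hx
  refine D.mem_adj_iff.mpr fun i => ?_
  obtain ⟨p, hpP, hpi⟩ := D.facet_nonempty hn i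
  have hp : p ∈ D'.adj (-s) :=
    D.adj_add_subset_adj D' hQ (-s) (by rwa [add_neg_cancel, adj_zero])
  simpa [add_assoc] using D'.add_le_ipair_of_mem_adj (hvalid i) hp hpi hs hr hx

end PolyDesc

/-- Let `s ≥ 0`. (i) If `P⁽ˢ⁾` has dimension `n`, then, computing the
adjoint of `P⁽ˢ⁾` with respect to any irredundant facet description `D'` of `P⁽ˢ⁾`,
one has `(P⁽ˢ⁾)⁽ʳ⁾ = P⁽ˢ⁺ʳ⁾` for every `r ≥ 0`. (ii) For every real `r > 0` one has
`r • P⁽ˢ⁾ = (rP)⁽ʳˢ⁾`, where `rP` has the facet description `{x : ⟨aᵢ, x⟩ ≥ r bᵢ}`,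
so that `(rP)⁽ʳˢ⁾ = {x : ⟨aᵢ, x⟩ ≥ r bᵢ + r s for all i}`. -/
theorem statement1 {n m : ℕ} (D : PolyDesc n m) (s : ℝ) (hs : 0 ≤ s) :
    (setDim (D.adj s) = n →
      ∀ {m' : ℕ} (D' : PolyDesc n m'), D'.pts = D.adj s →
        ∀ r : ℝ, 0 ≤ r → D'.adj r = D.adj (s + r)) ∧
    (∀ r : ℝ, 0 < r →
      r • D.adj s = {x : Fin n → ℝ | ∀ i, r * (D.b i : ℝ) + r * s ≤ ipair (D.A i) x}) :=
  ⟨fun _ {_} D' hD' r hr =>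
    (D.adj_subset_adj_add D' hs hD' hr).antisymm (D.adj_add_subset_adj D' hD' r),
    fun _ hr => D.smul_adj hr s⟩

end
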